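/- Gallai-Edmonds edge exclusion: in a bipartite graph G1 with Gallai-Edmonds classes O (odd), E (even), U (unreachable), no maximum matching of G1 contains an edge joining a vertex of O to a vertex of O ∪ U; moreover G1 contains no edge joining a vertex of E to a vertex of E ∪ U. -/

import Mathlib

universe u v

/-- A matching assigns to each person at most one item, injectively on items. -/
def IsMatching {α β : Type*} (M : α → Option β) : Prop :=
  ∀ a a' b, M a = some b → M a' = some b → a = a'

/-- A matching using only edges of the bipartite graph `E`. -/
def IsMatchingOn {α β : Type*} (E : α → β → Prop) (M : α → Option β) : Prop :=
  (∀ a b, M a = some b → E a b) ∧ IsMatching M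

/-- Number of matched people (= number of edges of the matching). -/
noncomputable def msize {α β : Type*} [Fintype α] (M : α → Option β) : ℕ :=
  Nat.card {a // (M a).isSome}

/-- A maximum cardinality matching of the bipartite graph `E`. -/
def IsMaxMatchingOn {α β : Type*} [Fintype α] (E : α → β → Prop) (M : α → Option β) : Prop :=
  IsMatchingOn E M ∧ ∀ M', IsMatchingOn E M' → msize M' ≤ msize M

mutual
  /-- A person reachable from an `M`-unmatched vertex by an even-length alternating path
  (such paths start at an unmatched person). -/
  inductive EvenA {α : Type u} {β : Type v} (E : α → β → Prop) (M : α → Option β) : α → Prop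
    | base (a : α) : M a = none → EvenA E M a
    | step (a : α) (b : β) : OddB E M b → M a = some b → EvenA E M a
  /-- An item reachable from an `M`-unmatched vertex by an odd-length alternating path. -/
  inductive OddB {α : Type u} {β : Type v} (E : α → β → Prop) (M : α → Option β) : β → Prop
    | step (a : α) (b : β) : EvenA E M a → E a b → M a ≠ some b → OddB E M b
end

mutual
  /-- An item reachable from an `M`-unmatched vertex by an even-length alternating path
  (such paths start at an unmatched item). -/
  inductive EvenB {α : Type u} {β : Type v} (E : α → β → Prop) (M : α → Option β) : β → Prop
    | base (b : β) : (∀ a, M a ≠ some b) → EvenB E M b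
    | step (a : α) (b : β) : OddA E M a → M a = some b → EvenB E M b
  /-- A person reachable from an `M`-unmatched vertex by an odd-length alternating path. -/
  inductive OddA {α : Type u} {β : Type v} (E : α → β → Prop) (M : α → Option β) : α → Prop
    | step (a : α) (b : β) : EvenB E M b → E a b → M a ≠ some b → OddA E M a
end

/-- An unreachable person: no alternating path from an unmatched vertex reaches it. -/
def UnreachA {α β : Type*} (E : α → β → Prop) (M : α → Option β) (a : α) : Prop :=
  ¬ EvenA E M a ∧ ¬ OddA E M a

/-- An unreachable item: no alternating path from an unmatched vertex reaches it. -/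
def UnreachB {α β : Type*} (E : α → β → Prop) (M : α → Option β) (b : β) : Prop :=
  ¬ EvenB E M b ∧ ¬ OddB E M b

/-! The Gallai–Edmonds classes of `M0` are reachability classes for alternating paths, so
maximality of `M0` (no augmenting path) makes the even and odd classes disjoint, and an edge at
an even vertex always leads to an odd one. For another maximum matching `M`, the persons that are
even for `M0` are sent by `M` to odd items, which `M0` matches back to even persons; since `M`
and `M0` have the same size and every `M0`-free person is even, this correspondence is onto, so
the `M`-partner of an odd item is even. The same count with the non-odd persons and the
non-even items shows that the `M`-partner of a non-even item is not odd. -/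

open Finset

section Matchings

variable {α β : Type*} {E : α → β → Prop} {M M0 : α → Option β}

theorem msize_eq_card_filter [Fintype α] (M : α → Option β) :
    msize M = #{a | (M a).isSome} := by
  rw [msize, Nat.card_eq_fintype_card, Fintype.card_subtype]

theorem msize_le_msize [Fintype α] {M' : α → Option β}
    (h : ∀ a, (M a).isSome → (M' a).isSome) : msize M ≤ msize M' := by
  rw [msize_eq_card_filter, msize_eq_card_filter]
  exact card_le_card fun x hx => by simpa using h x (by simpa using hx)

theorem msize_lt_msize [Fintype α] {M' : α → Option β} {a : α}
    (h : ∀ a, (M a).isSome → (M' a).isSome) (ha : M a = none) (ha' : (M' a).isSome) :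
    msize M < msize M' := by
  rw [msize_eq_card_filter, msize_eq_card_filter]
  refine card_lt_card ⟨fun x hx => by simpa using h x (by simpa using hx), fun hsub => ?_⟩
  simpa [ha] using hsub (by simpa using ha' : a ∈ ({a | (M' a).isSome} : Finset α))

theorem IsMatching.card_filterMap (hM : IsMatching M) (s : Finset α) :
    #(s.filterMap M fun _ _ b hx hy => hM _ _ b hx hy) = #{a ∈ s | (M a).isSome} := by
  symm
  refine card_bij (fun a ha => (M a).get (mem_filter.1 ha).2) (fun a ha => ?_)
    (fun x _ y _ hxy => hM x y _ (Option.eq_some_of_isSome _)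
      (by rw [hxy]; exact Option.eq_some_of_isSome _))
    (fun b hb => ?_)
  · exact (mem_filterMap _).2 ⟨a, (mem_filter.1 ha).1, Option.eq_some_of_isSome _⟩
  · obtain ⟨a, ha, hab⟩ := (mem_filterMap _).1 hb
    exact ⟨a, mem_filter.2 ⟨ha, by simp [hab]⟩, by simp [hab]⟩

/-- Counting: `#M(S) ≥ #S - #(M-free) ≥ #S - #(M0-free) = #M0(S)`, so the inclusion
`M(S) ⊆ M0(S)` given by `hmaps` is an equality. -/
theorem IsMatching.mem_of_partner_mem [Fintype α] {S : α → Prop} {a w : α} {b : β}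
    (hM : IsMatching M) (hM0 : IsMatching M0) (hsize : msize M0 ≤ msize M)
    (hfree : ∀ a, M0 a = none → S a)
    (hmaps : ∀ a b, S a → M a = some b → ∃ w, M0 w = some b ∧ S w)
    (hw : M0 w = some b) (hwS : S w) (hab : M a = some b) : S a := by
  classical
  set s : Finset α := {a | S a}
  set I := s.filterMap M fun _ _ b hx hy => hM _ _ b hx hy
  set I0 := s.filterMap M0 fun _ _ b hx hy => hM0 _ _ b hx hy
  have hsub : I ⊆ I0 := by
    intro b hb
    obtain ⟨a, ha, hab⟩ := (mem_filterMap _).1 hb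
    obtain ⟨w, hw, hwS⟩ := hmaps a b (by simpa [s] using ha) hab
    exact (mem_filterMap _).2 ⟨w, by simpa [s] using hwS, hw⟩
  have hcard : #I0 ≤ #I := by
    have h1 := card_filter_add_card_filter_not (s := s) fun a => (M a).isSome
    have h2 := card_filter_add_card_filter_not (s := s) fun a => (M0 a).isSome
    have h3 := card_filter_add_card_filter_not (s := univ) fun a => (M a).isSome
    have h4 := card_filter_add_card_filter_not (s := univ) fun a => (M0 a).isSome
    have h5 : #{a ∈ s | ¬(M a).isSome} ≤ #{a | ¬(M a).isSome} :=
      card_le_card (filter_subset_filter _ (subset_univ s))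
    have h6 : s.filter (fun a => ¬(M0 a).isSome) = univ.filter fun a => ¬(M0 a).isSome := by
      ext a
      simpa [s] using hfree a
    rw [← msize_eq_card_filter] at h3 h4
    rw [h6] at h2
    rw [hM.card_filterMap, hM0.card_filterMap]
    omega
  have hbI : b ∈ I := eq_of_subset_of_card_le hsub hcard ▸
    (mem_filterMap _).2 ⟨w, by simpa [s] using hwS, hw⟩
  obtain ⟨a', ha', ha'b⟩ := (mem_filterMap _).1 hbI
  exact hM a' a b ha'b hab ▸ by simpa [s] using ha'

theorem IsMatchingOn.update [DecidableEq α] {a : α} {b : β} (hM : IsMatchingOn E M)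
    (hE : E a b) (hb : ∀ x, M x ≠ some b) : IsMatchingOn E (Function.update M a (some b)) := by
  refine ⟨fun x c hx => ?_, fun x y c hx hy => ?_⟩
  · rcases eq_or_ne x a with rfl | hxa
    · simp_all
    · exact hM.1 x c (by simpa [hxa] using hx)
  · by_cases hxa : x = a <;> by_cases hya : y = a
    · rw [hxa, hya]
    · subst hxa; simp_all
    · subst hya; simp_all
    · exact hM.2 x y c (by simpa [hxa] using hx) (by simpa [hya] using hy)

/-- `EvenAWithin E M n a`: `a` is reached from an `M`-free person by an alternating path with at
most `n` matching edges. -/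
def EvenAWithin (E : α → β → Prop) (M : α → Option β) : ℕ → α → Prop
  | 0, a => M a = none
  | n + 1, a => EvenAWithin E M n a ∨
      ∃ a' b, EvenAWithin E M n a' ∧ E a' b ∧ M a' ≠ some b ∧ M a = some b

mutual

theorem EvenA.exists_evenAWithin {a : α} : EvenA E M a → ∃ n, EvenAWithin E M n a
  | .base _ ha => ⟨0, ha⟩
  | .step _ b hb hab =>
    let ⟨n, a', ha', hE, hne⟩ := hb.exists_evenAWithin
    ⟨n + 1, .inr ⟨a', b, ha', hE, hne, hab⟩⟩

theorem OddB.exists_evenAWithin {b : β} :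
    OddB E M b → ∃ n a, EvenAWithin E M n a ∧ E a b ∧ M a ≠ some b
  | .step a _ ha hE hne =>
    let ⟨n, ha⟩ := ha.exists_evenAWithin
    ⟨n, a, ha, hE, hne⟩

end

/-- Rematching the matched person `a` keeps the alternating paths that avoid `a`; a path meeting
`a` gives one to `a` that is no longer. -/
theorem EvenAWithin.update [DecidableEq α] {a x : α} {b : β} {n : ℕ} (ha : M a ≠ none)
    (hx : EvenAWithin E M n x) :
    EvenAWithin E (Function.update M a (some b)) n x ∨ EvenAWithin E M n a := by
  induction n generalizing x with
  | zero =>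
    have hxa : x ≠ a := by rintro rfl; exact ha hx
    exact .inl (by simpa [EvenAWithin, hxa] using hx)
  | succ n ih =>
    rcases hx with hx | ⟨a', b', ha', hE, hne, hxb'⟩
    · exact (ih hx).imp .inl .inl
    rcases eq_or_ne x a with rfl | hxa
    · exact .inr (.inr ⟨a', b', ha', hE, hne, hxb'⟩)
    rcases eq_or_ne a' a with rfl | ha'a
    · exact .inr (.inl ha')
    refine (ih ha').imp (fun h => .inr ⟨a', b', h, hE, ?_, ?_⟩) .inl
    · simpa [ha'a] using hne
    · simpa [hxa] using hxb'

theorem EvenAWithin.exists_msize_lt [Fintype α] {a : α} {b : β} {n : ℕ}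
    (hM : IsMatchingOn E M) (ha : EvenAWithin E M n a) (hE : E a b) (hb : ∀ x, M x ≠ some b) :
    ∃ N, IsMatchingOn E N ∧ msize M < msize N := by
  classical
  induction n generalizing M a b with
  | zero =>
    refine ⟨Function.update M a (some b), hM.update hE hb,
      msize_lt_msize (fun x hx => ?_) ha (by simp)⟩
    rcases eq_or_ne x a with rfl | hxa <;> simp_all
  | succ n ih =>
    rcases ha with ha | ⟨a1, b0, ha1, hE1, hne1, hab0⟩
    · exact ih hM ha hE hb
    -- rematch `a` to `b`: this frees `b0`, a neighbour of `a1`, which is one step closer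
    have hM' := hM.update hE hb
    have hle : msize M ≤ msize (Function.update M a (some b)) :=
      msize_le_msize fun x hx => by rcases eq_or_ne x a with rfl | hxa <;> simp_all
    have hb0 : ∀ x, Function.update M a (some b) x ≠ some b0 := by
      intro x hx
      rcases eq_or_ne x a with rfl | hxa
      · exact hb x (by simp_all)
      · exact hxa (hM.2 x a b0 (by simpa [hxa] using hx) hab0)
    rcases ha1.update (a := a) (b := b) (by simp [hab0]) with ha1' | ha
    · obtain ⟨N, hN, hlt⟩ := ih hM' ha1' hE1 hb0
      exact ⟨N, hN, hle.trans_lt hlt⟩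
    · exact ih hM ha hE hb

def HasAugmentingPath (E : α → β → Prop) (M : α → Option β) : Prop :=
  ∃ a b, EvenA E M a ∧ E a b ∧ ∀ x, M x ≠ some b

theorem IsMaxMatchingOn.not_hasAugmentingPath [Fintype α] (hM : IsMaxMatchingOn E M) :
    ¬ HasAugmentingPath E M := by
  rintro ⟨a, b, ha, hE, hb⟩
  obtain ⟨n, ha⟩ := ha.exists_evenAWithin
  obtain ⟨N, hN, hlt⟩ := ha.exists_msize_lt hM.1 hE hb
  exact (hM.2 N hN).not_gt hlt

mutual

theorem EvenB.hasAugmentingPath {a : α} {b : β} :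
    EvenB E M b → EvenA E M a → E a b → M a ≠ some b → HasAugmentingPath E M
  | .base _ hb, ha, hE, _ => ⟨a, b, ha, hE, hb⟩
  | .step a' _ ha' hab, ha, hE, hne => ha'.hasAugmentingPath (.step a' b (.step a b ha hE hne) hab)

theorem OddA.hasAugmentingPath {a : α} : OddA E M a → EvenA E M a → HasAugmentingPath E M
  | .step _ _ hb hE hne, ha => hb.hasAugmentingPath ha hE hne

end

theorem EvenA.oddB_of_adj {a : α} {b : β} (ha : EvenA E M a) (hE : E a b) : OddB E M b := by
  by_cases hab : M a = some b
  · rcases ha with _ | ⟨_, b', hb', hab'⟩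
    · simp_all
    · exact (Option.some_injective _ (hab'.symm.trans hab)) ▸ hb'
  · exact .step a b ha hE hab

theorem EvenB.oddA_of_adj {a : α} {b : β} (hM : IsMatching M) (hb : EvenB E M b) (hE : E a b) :
    OddA E M a := by
  by_cases hab : M a = some b
  · rcases hb with ⟨_, hfree⟩ | ⟨a', _, ha', ha'b⟩
    · exact absurd hab (hfree a)
    · exact hM a' a b ha'b hab ▸ ha'
  · exact .step a b hb hE hab

theorem exists_not_oddA_of_not_evenB {b : β} (hb : ¬ EvenB E M b) :
    ∃ a, M a = some b ∧ ¬ OddA E M a := by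
  by_cases hfree : ∀ a, M a ≠ some b
  · exact absurd (.base b hfree) hb
  obtain ⟨a, hab⟩ := not_forall_not.mp hfree
  exact ⟨a, hab, fun ha => hb (.step a b ha hab)⟩

section Maximum

variable [Fintype α]

theorem IsMaxMatchingOn.not_oddA_of_evenA {a : α} (hM : IsMaxMatchingOn E M)
    (ha : EvenA E M a) : ¬ OddA E M a :=
  fun ha' => hM.not_hasAugmentingPath (ha'.hasAugmentingPath ha)

theorem IsMaxMatchingOn.not_oddB_of_evenB {b : β} (hM : IsMaxMatchingOn E M)
    (hb : EvenB E M b) : ¬ OddB E M b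
  | .step _ _ ha hE hne => hM.not_hasAugmentingPath (hb.hasAugmentingPath ha hE hne)

theorem IsMaxMatchingOn.exists_evenA_of_oddB {b : β} (hM : IsMaxMatchingOn E M)
    (hb : OddB E M b) : ∃ a, M a = some b ∧ EvenA E M a :=
  let ⟨a, hab, _⟩ := exists_not_oddA_of_not_evenB fun hb' => hM.not_oddB_of_evenB hb' hb
  ⟨a, hab, .step a b hb hab⟩

theorem IsMaxMatchingOn.evenA_of_oddB {a : α} {b : β} (hM0 : IsMaxMatchingOn E M0)
    (hM : IsMaxMatchingOn E M) (hb : OddB E M0 b) (hab : M a = some b) : EvenA E M0 a := by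
  obtain ⟨w, hw, hwe⟩ := hM0.exists_evenA_of_oddB hb
  refine hM.1.2.mem_of_partner_mem hM0.1.2 (hM.2 M0 hM0.1) EvenA.base
    (fun a' b' ha' hab' => ?_) hw hwe hab
  exact hM0.exists_evenA_of_oddB (ha'.oddB_of_adj (hM.1.1 a' b' hab'))

theorem IsMaxMatchingOn.not_oddA_of_not_evenB {a : α} {b : β} (hM0 : IsMaxMatchingOn E M0)
    (hM : IsMaxMatchingOn E M) (hb : ¬ EvenB E M0 b) (hab : M a = some b) : ¬ OddA E M0 a := by
  obtain ⟨w, hw, hwo⟩ := exists_not_oddA_of_not_evenB hb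
  refine hM.1.2.mem_of_partner_mem (S := fun a => ¬ OddA E M0 a) hM0.1.2 (hM.2 M0 hM0.1)
    (fun a h => hM0.not_oddA_of_evenA (.base a h)) (fun a' b' ha' hab' => ?_) hw hwo hab
  exact exists_not_oddA_of_not_evenB fun hb' => ha' (hb'.oddA_of_adj hM0.1.2 (hM.1.1 a' b' hab'))

end Maximum

end Matchings

/-- Gallai–Edmonds edge exclusion: with classes taken with respect to a maximum matching
`M0`, no maximum matching contains an edge joining an odd vertex to an odd or unreachable
vertex; moreover the graph has no edge joining an even vertex to an even or unreachable
vertex. -/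
theorem gallai_edmonds_edge_exclusion {α β : Type*} [Fintype α]
    (E : α → β → Prop) (M0 : α → Option β) (hM0 : IsMaxMatchingOn E M0) :
    (∀ M, IsMaxMatchingOn E M → ∀ a b, M a = some b →
      ¬ (OddA E M0 a ∧ (OddB E M0 b ∨ UnreachB E M0 b)) ∧
      ¬ (OddB E M0 b ∧ (OddA E M0 a ∨ UnreachA E M0 a))) ∧
    (∀ a b, E a b →
      ¬ (EvenA E M0 a ∧ (EvenB E M0 b ∨ UnreachB E M0 b)) ∧
      ¬ (EvenB E M0 b ∧ (EvenA E M0 a ∨ UnreachA E M0 a))) := by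
  refine ⟨fun M hM a b hab => ⟨?_, ?_⟩, fun a b hE => ⟨?_, ?_⟩⟩
  · rintro ⟨ha, hb | hb⟩
    · exact hM0.not_oddA_of_not_evenB hM (fun hb' => hM0.not_oddB_of_evenB hb' hb) hab ha
    · exact hM0.not_oddA_of_not_evenB hM hb.1 hab ha
  · rintro ⟨hb, ha | ha⟩
    · exact hM0.not_oddA_of_evenA (hM0.evenA_of_oddB hM hb hab) ha
    · exact ha.1 (hM0.evenA_of_oddB hM hb hab)
  · rintro ⟨ha, hb | hb⟩
    · exact hM0.not_oddB_of_evenB hb (ha.oddB_of_adj hE)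
    · exact hb.2 (ha.oddB_of_adj hE)
  · rintro ⟨hb, ha | ha⟩
    · exact hM0.not_oddA_of_evenA ha (hb.oddA_of_adj hM0.1.2 hE)
    · exact ha.2 (hb.oddA_of_adj hM0.1.2 hE)
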